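/- arXiv:2405.18835 — 2 statements merged into one kernel-verified Lean document; each statement's English description precedes it below -/
import Mathlib

section
/- If Δ is a local super-derivation of the super Schrödinger algebra 𝒮 satisfying Δ(h+z) = 0, then Δ(h) = 0 and Δ(z) = 0. -/
noncomputable section

/-- Underlying space of the N=1 super Schrödinger algebra: coordinates in the
ordered basis (e, f, h, p, q, z, E, F, G). -/
abbrev SS : Type := Fin 9 → ℂ

def eV : SS := Pi.single 0 1
def fV : SS := Pi.single 1 1
def hV : SS := Pi.single 2 1
def pV : SS := Pi.single 3 1
def qV : SS := Pi.single 4 1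
def zV : SS := Pi.single 5 1
def EV : SS := Pi.single 6 1
def FV : SS := Pi.single 7 1
def GV : SS := Pi.single 8 1

/-- Brackets of basis elements (structure constants), encoding the table
[h,e]=2e, [h,f]=-2f, [e,f]=h, [h,p]=p, [h,q]=-q, [p,q]=z, [e,q]=p, [p,f]=-q,
[h,E]=E, [h,F]=-F, [e,F]=-E, [f,E]=-F, [p,F]=G, [q,E]=G, [E,E]=2e, [F,F]=-2f,
[G,G]=z, [E,F]=-h, [E,G]=-p, [F,G]=q, extended by graded skew-symmetry. -/
def brkB (i j : Fin 9) : SS :=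
  match i.val, j.val with
  | 0, 1 => hV
  | 0, 4 => pV
  | 0, 7 => -EV
  | 1, 0 => -hV
  | 1, 2 => (2:ℂ) • fV
  | 1, 3 => qV
  | 1, 6 => -FV
  | 2, 0 => (2:ℂ) • eV
  | 2, 1 => (-2:ℂ) • fV
  | 2, 3 => pV
  | 2, 4 => -qV
  | 2, 6 => EV
  | 2, 7 => -FV
  | 3, 1 => -qV
  | 3, 2 => -pV
  | 3, 4 => zV
  | 3, 7 => GV
  | 4, 0 => -pV
  | 4, 2 => qV
  | 4, 3 => -zV
  | 4, 6 => GV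
  | 6, 1 => FV
  | 6, 2 => -EV
  | 6, 4 => -GV
  | 6, 6 => (2:ℂ) • eV
  | 6, 7 => -hV
  | 6, 8 => -pV
  | 7, 0 => EV
  | 7, 2 => FV
  | 7, 3 => -GV
  | 7, 6 => -hV
  | 7, 7 => (-2:ℂ) • fV
  | 7, 8 => qV
  | 8, 6 => -pV
  | 8, 7 => qV
  | 8, 8 => zV
  | _, _ => 0

/-- The bilinear bracket of the super Schrödinger algebra. -/
def brk (x y : SS) : SS :=
  ∑ i : Fin 9, ∑ j : Fin 9, (x i * y j) • brkB i j

/-- The even part 𝒮₀ = span_ℂ{e, f, h, p, q, z}. -/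
def S0 : Submodule ℂ SS := Submodule.span ℂ {eV, fV, hV, pV, qV, zV}

/-- The odd part 𝒮₁ = span_ℂ{E, F, G}. -/
def S1 : Submodule ℂ SS := Submodule.span ℂ {EV, FV, GV}

/-- `D` is a super-derivation of degree 0̄. -/
def IsSuperDer0 (D : SS → SS) : Prop :=
  IsLinearMap ℂ D ∧
  (∀ x ∈ S0, D x ∈ S0) ∧ (∀ x ∈ S1, D x ∈ S1) ∧
  (∀ x y : SS, (x ∈ S0 ∨ x ∈ S1) → (y ∈ S0 ∨ y ∈ S1) →
    D (brk x y) = brk (D x) y + brk x (D y))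

/-- `D` is a super-derivation of degree 1̄. -/
def IsSuperDer1 (D : SS → SS) : Prop :=
  IsLinearMap ℂ D ∧
  (∀ x ∈ S0, D x ∈ S1) ∧ (∀ x ∈ S1, D x ∈ S0) ∧
  (∀ x y : SS, x ∈ S0 → (y ∈ S0 ∨ y ∈ S1) →
    D (brk x y) = brk (D x) y + brk x (D y)) ∧
  (∀ x y : SS, x ∈ S1 → (y ∈ S0 ∨ y ∈ S1) →
    D (brk x y) = brk (D x) y - brk x (D y))

/-- `D` is a super-derivation: a sum of super-derivations of degrees 0̄ and 1̄. -/
def IsSuperDer (D : SS → SS) : Prop :=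
  ∃ D0 D1 : SS → SS, IsSuperDer0 D0 ∧ IsSuperDer1 D1 ∧ ∀ x, D x = D0 x + D1 x

/-- `Δ` is a local super-derivation: a linear map such that for every `x` there is a
super-derivation `D` (depending on `x`) with `Δ x = D x`. -/
def IsLocalSuperDer (Δ : SS → SS) : Prop :=
  IsLinearMap ℂ Δ ∧ ∀ x : SS, ∃ D : SS → SS, IsSuperDer D ∧ Δ x = D x

/-- The even linear map δ with δ(e)=δ(f)=δ(h)=δ(E)=δ(F)=0, δ(p)=p, δ(q)=q,
δ(z)=2z, δ(G)=G. -/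
def deltaMap (x : SS) : SS :=
  x 3 • pV + x 4 • qV + (2 * x 5) • zV + x 8 • GV

/- ### Auxiliary machinery -/

lemma sum9C (f : Fin 9 → ℂ) : ∑ i, f i =
    f 0 + f 1 + f 2 + f 3 + f 4 + f 5 + f 6 + f 7 + f 8 := by
  simp [Fin.sum_univ_succ, add_assoc]

lemma brk_right_single (x : SS) (k m : Fin 9) :
    brk x (Pi.single k 1) m = ∑ i : Fin 9, x i * brkB i k m := by
  simp [brk, Finset.sum_apply, Pi.single_apply, mul_ite, ite_smul]

lemma brk_left_single (y : SS) (k m : Fin 9) :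
    brk (Pi.single k 1) y m = ∑ j : Fin 9, y j * brkB k j m := by
  simp only [brk, Finset.sum_apply, Pi.single_apply, ite_mul, one_mul, zero_mul,
    ite_smul, zero_smul, Pi.smul_apply, smul_eq_mul]
  simp [apply_ite (fun f : SS => f m), Finset.sum_apply, Finset.sum_ite_eq]

@[simp] lemma brkB_0_0 : brkB 0 0 = (0 : SS) := rfl
@[simp] lemma brkB_0_1 : brkB 0 1 = (hV : SS) := rfl
@[simp] lemma brkB_0_2 : brkB 0 2 = (0 : SS) := rfl
@[simp] lemma brkB_0_3 : brkB 0 3 = (0 : SS) := rfl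
@[simp] lemma brkB_0_4 : brkB 0 4 = (pV : SS) := rfl
@[simp] lemma brkB_0_5 : brkB 0 5 = (0 : SS) := rfl
@[simp] lemma brkB_0_6 : brkB 0 6 = (0 : SS) := rfl
@[simp] lemma brkB_0_7 : brkB 0 7 = (-EV : SS) := rfl
@[simp] lemma brkB_0_8 : brkB 0 8 = (0 : SS) := rfl
@[simp] lemma brkB_1_0 : brkB 1 0 = (-hV : SS) := rfl
@[simp] lemma brkB_1_1 : brkB 1 1 = (0 : SS) := rfl
@[simp] lemma brkB_1_2 : brkB 1 2 = ((2:ℂ) • fV : SS) := rfl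
@[simp] lemma brkB_1_3 : brkB 1 3 = (qV : SS) := rfl
@[simp] lemma brkB_1_4 : brkB 1 4 = (0 : SS) := rfl
@[simp] lemma brkB_1_5 : brkB 1 5 = (0 : SS) := rfl
@[simp] lemma brkB_1_6 : brkB 1 6 = (-FV : SS) := rfl
@[simp] lemma brkB_1_7 : brkB 1 7 = (0 : SS) := rfl
@[simp] lemma brkB_1_8 : brkB 1 8 = (0 : SS) := rfl
@[simp] lemma brkB_2_0 : brkB 2 0 = ((2:ℂ) • eV : SS) := rfl
@[simp] lemma brkB_2_1 : brkB 2 1 = ((-2:ℂ) • fV : SS) := rfl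
@[simp] lemma brkB_2_2 : brkB 2 2 = (0 : SS) := rfl
@[simp] lemma brkB_2_3 : brkB 2 3 = (pV : SS) := rfl
@[simp] lemma brkB_2_4 : brkB 2 4 = (-qV : SS) := rfl
@[simp] lemma brkB_2_5 : brkB 2 5 = (0 : SS) := rfl
@[simp] lemma brkB_2_6 : brkB 2 6 = (EV : SS) := rfl
@[simp] lemma brkB_2_7 : brkB 2 7 = (-FV : SS) := rfl
@[simp] lemma brkB_2_8 : brkB 2 8 = (0 : SS) := rfl
@[simp] lemma brkB_3_0 : brkB 3 0 = (0 : SS) := rfl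
@[simp] lemma brkB_3_1 : brkB 3 1 = (-qV : SS) := rfl
@[simp] lemma brkB_3_2 : brkB 3 2 = (-pV : SS) := rfl
@[simp] lemma brkB_3_3 : brkB 3 3 = (0 : SS) := rfl
@[simp] lemma brkB_3_4 : brkB 3 4 = (zV : SS) := rfl
@[simp] lemma brkB_3_5 : brkB 3 5 = (0 : SS) := rfl
@[simp] lemma brkB_3_6 : brkB 3 6 = (0 : SS) := rfl
@[simp] lemma brkB_3_7 : brkB 3 7 = (GV : SS) := rfl
@[simp] lemma brkB_3_8 : brkB 3 8 = (0 : SS) := rfl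
@[simp] lemma brkB_4_0 : brkB 4 0 = (-pV : SS) := rfl
@[simp] lemma brkB_4_1 : brkB 4 1 = (0 : SS) := rfl
@[simp] lemma brkB_4_2 : brkB 4 2 = (qV : SS) := rfl
@[simp] lemma brkB_4_3 : brkB 4 3 = (-zV : SS) := rfl
@[simp] lemma brkB_4_4 : brkB 4 4 = (0 : SS) := rfl
@[simp] lemma brkB_4_5 : brkB 4 5 = (0 : SS) := rfl
@[simp] lemma brkB_4_6 : brkB 4 6 = (GV : SS) := rfl
@[simp] lemma brkB_4_7 : brkB 4 7 = (0 : SS) := rfl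
@[simp] lemma brkB_4_8 : brkB 4 8 = (0 : SS) := rfl
@[simp] lemma brkB_5_0 : brkB 5 0 = (0 : SS) := rfl
@[simp] lemma brkB_5_1 : brkB 5 1 = (0 : SS) := rfl
@[simp] lemma brkB_5_2 : brkB 5 2 = (0 : SS) := rfl
@[simp] lemma brkB_5_3 : brkB 5 3 = (0 : SS) := rfl
@[simp] lemma brkB_5_4 : brkB 5 4 = (0 : SS) := rfl
@[simp] lemma brkB_5_5 : brkB 5 5 = (0 : SS) := rfl
@[simp] lemma brkB_5_6 : brkB 5 6 = (0 : SS) := rfl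
@[simp] lemma brkB_5_7 : brkB 5 7 = (0 : SS) := rfl
@[simp] lemma brkB_5_8 : brkB 5 8 = (0 : SS) := rfl
@[simp] lemma brkB_6_0 : brkB 6 0 = (0 : SS) := rfl
@[simp] lemma brkB_6_1 : brkB 6 1 = (FV : SS) := rfl
@[simp] lemma brkB_6_2 : brkB 6 2 = (-EV : SS) := rfl
@[simp] lemma brkB_6_3 : brkB 6 3 = (0 : SS) := rfl
@[simp] lemma brkB_6_4 : brkB 6 4 = (-GV : SS) := rfl
@[simp] lemma brkB_6_5 : brkB 6 5 = (0 : SS) := rfl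
@[simp] lemma brkB_6_6 : brkB 6 6 = ((2:ℂ) • eV : SS) := rfl
@[simp] lemma brkB_6_7 : brkB 6 7 = (-hV : SS) := rfl
@[simp] lemma brkB_6_8 : brkB 6 8 = (-pV : SS) := rfl
@[simp] lemma brkB_7_0 : brkB 7 0 = (EV : SS) := rfl
@[simp] lemma brkB_7_1 : brkB 7 1 = (0 : SS) := rfl
@[simp] lemma brkB_7_2 : brkB 7 2 = (FV : SS) := rfl
@[simp] lemma brkB_7_3 : brkB 7 3 = (-GV : SS) := rfl
@[simp] lemma brkB_7_4 : brkB 7 4 = (0 : SS) := rfl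
@[simp] lemma brkB_7_5 : brkB 7 5 = (0 : SS) := rfl
@[simp] lemma brkB_7_6 : brkB 7 6 = (-hV : SS) := rfl
@[simp] lemma brkB_7_7 : brkB 7 7 = ((-2:ℂ) • fV : SS) := rfl
@[simp] lemma brkB_7_8 : brkB 7 8 = (qV : SS) := rfl
@[simp] lemma brkB_8_0 : brkB 8 0 = (0 : SS) := rfl
@[simp] lemma brkB_8_1 : brkB 8 1 = (0 : SS) := rfl
@[simp] lemma brkB_8_2 : brkB 8 2 = (0 : SS) := rfl
@[simp] lemma brkB_8_3 : brkB 8 3 = (0 : SS) := rfl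
@[simp] lemma brkB_8_4 : brkB 8 4 = (0 : SS) := rfl
@[simp] lemma brkB_8_5 : brkB 8 5 = (0 : SS) := rfl
@[simp] lemma brkB_8_6 : brkB 8 6 = (-pV : SS) := rfl
@[simp] lemma brkB_8_7 : brkB 8 7 = (qV : SS) := rfl
@[simp] lemma brkB_8_8 : brkB 8 8 = (zV : SS) := rfl


/- ### Bracket identities -/

lemma brk_pq : brk pV qV = zV := by
  funext m
  rw [show qV = Pi.single 4 1 from rfl, show pV = Pi.single 3 1 from rfl,
    brk_right_single, sum9C]
  simp [Pi.single_apply]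

lemma brk_ef : brk eV fV = hV := by
  funext m
  rw [show fV = Pi.single 1 1 from rfl, show eV = Pi.single 0 1 from rfl,
    brk_right_single, sum9C]
  simp [Pi.single_apply]

lemma brk_GG : brk GV GV = zV := by
  funext m
  rw [show GV = Pi.single 8 1 from rfl, brk_right_single, sum9C]
  simp [Pi.single_apply]

lemma brk_EF : brk EV FV = -hV := by
  funext m
  rw [show FV = Pi.single 7 1 from rfl, show EV = Pi.single 6 1 from rfl,
    brk_right_single, sum9C]
  simp [Pi.single_apply]

lemma brk_z_right (x : SS) : brk x zV = 0 := by
  funext m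
  rw [show zV = Pi.single 5 1 from rfl, brk_right_single, sum9C]
  simp

/- ### Component facts -/

lemma brk_q_comp (x : SS) (k : Fin 9) (hk : k = 0 ∨ k = 1 ∨ k = 2 ∨ k = 6 ∨ k = 7) :
    brk x qV k = 0 := by
  rw [show qV = Pi.single 4 1 from rfl, brk_right_single, sum9C]
  rcases hk with rfl | rfl | rfl | rfl | rfl <;>
    simp [Pi.single_apply, eV, fV, hV, pV, qV, zV, EV, FV, GV]

lemma brk_q_comp8 (x : SS) : brk x qV 8 = -x 6 := by
  rw [show qV = Pi.single 4 1 from rfl, brk_right_single, sum9C]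
  simp [Pi.single_apply, eV, fV, hV, pV, qV, zV, EV, FV, GV]

lemma brk_p_comp (y : SS) (k : Fin 9) (hk : k = 0 ∨ k = 1 ∨ k = 2 ∨ k = 6 ∨ k = 7) :
    brk pV y k = 0 := by
  rw [show pV = Pi.single 3 1 from rfl, brk_left_single, sum9C]
  rcases hk with rfl | rfl | rfl | rfl | rfl <;>
    simp [Pi.single_apply, eV, fV, hV, pV, qV, zV, EV, FV, GV]

lemma brk_p_comp8 (y : SS) : brk pV y 8 = y 7 := by
  rw [show pV = Pi.single 3 1 from rfl, brk_left_single, sum9C]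
  simp [Pi.single_apply, eV, fV, hV, pV, qV, zV, EV, FV, GV]

lemma brk_h_comp3 (w : SS) : brk hV w 3 = w 3 := by
  rw [show hV = Pi.single 2 1 from rfl, brk_left_single, sum9C]
  simp [Pi.single_apply, eV, fV, hV, pV, qV, zV, EV, FV, GV]

lemma brk_h_comp4 (w : SS) : brk hV w 4 = -w 4 := by
  rw [show hV = Pi.single 2 1 from rfl, brk_left_single, sum9C]
  simp [Pi.single_apply, eV, fV, hV, pV, qV, zV, EV, FV, GV]

lemma brk_f_comp5 (x : SS) : brk x fV 5 = 0 := by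
  rw [show fV = Pi.single 1 1 from rfl, brk_right_single, sum9C]
  simp [Pi.single_apply, eV, fV, hV, pV, qV, zV, EV, FV, GV]

lemma brk_e_comp5 (y : SS) : brk eV y 5 = 0 := by
  rw [show eV = Pi.single 0 1 from rfl, brk_left_single, sum9C]
  simp [Pi.single_apply, eV, fV, hV, pV, qV, zV, EV, FV, GV]

lemma brk_F_comp5 (x : SS) : brk x FV 5 = 0 := by
  rw [show FV = Pi.single 7 1 from rfl, brk_right_single, sum9C]
  simp [Pi.single_apply, eV, fV, hV, pV, qV, zV, EV, FV, GV]

lemma brk_E_comp5 (y : SS) : brk EV y 5 = 0 := by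
  rw [show EV = Pi.single 6 1 from rfl, brk_left_single, sum9C]
  simp [Pi.single_apply, eV, fV, hV, pV, qV, zV, EV, FV, GV]

lemma brk_G_right (x : SS) (h6 : x 6 = 0) (h7 : x 7 = 0) (h8 : x 8 = 0) :
    brk x GV = 0 := by
  funext m
  rw [show GV = Pi.single 8 1 from rfl, brk_right_single, sum9C]
  simp [h6, h7, h8]

lemma brk_G_left (y : SS) (h6 : y 6 = 0) (h7 : y 7 = 0) (h8 : y 8 = 0) :
    brk GV y = 0 := by
  funext m
  rw [show GV = Pi.single 8 1 from rfl, brk_left_single, sum9C]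
  simp [h6, h7, h8]

/- ### Membership facts -/

lemma eV_mem : eV ∈ S0 := Submodule.subset_span (by simp)
lemma fV_mem : fV ∈ S0 := Submodule.subset_span (by simp)
lemma hV_mem : hV ∈ S0 := Submodule.subset_span (by simp)
lemma pV_mem : pV ∈ S0 := Submodule.subset_span (by simp)
lemma qV_mem : qV ∈ S0 := Submodule.subset_span (by simp)
lemma zV_mem : zV ∈ S0 := Submodule.subset_span (by simp)
lemma EV_mem : EV ∈ S1 := Submodule.subset_span (by simp)
lemma FV_mem : FV ∈ S1 := Submodule.subset_span (by simp)
lemma GV_mem : GV ∈ S1 := Submodule.subset_span (by simp)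

lemma mem_S0_comp {x : SS} (hx : x ∈ S0) : x 6 = 0 ∧ x 7 = 0 ∧ x 8 = 0 := by
  induction hx using Submodule.span_induction with
  | mem v hv =>
      simp only [Set.mem_insert_iff, Set.mem_singleton_iff] at hv
      rcases hv with rfl | rfl | rfl | rfl | rfl | rfl <;>
        simp [eV, fV, hV, pV, qV, zV, Pi.single_apply]
  | zero => simp
  | add a b _ _ ha hb => simp [ha.1, ha.2.1, ha.2.2, hb.1, hb.2.1, hb.2.2]
  | smul c a _ ha => simp [ha.1, ha.2.1, ha.2.2]

/- ### Key lemmas on super-derivations -/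

lemma der0_z (D : SS → SS) (hD : IsSuperDer0 D) (k : Fin 9) (hk : k ≠ 5) :
    D zV k = 0 := by
  obtain ⟨hlin, hS0, _, hder⟩ := hD
  have hz : D zV = brk (D pV) qV + brk pV (D qV) := by
    have h := hder pV qV (Or.inl pV_mem) (Or.inl qV_mem)
    rwa [brk_pq] at h
  -- components 3 and 4 vanish via the h-bracket
  have hbz : brk hV (D zV) = 0 := by
    have h := hder hV zV (Or.inl hV_mem) (Or.inl zV_mem)
    simp only [brk_z_right, hlin.map_zero, zero_add] at h
    exact h.symm
  fin_cases k
  · rw [hz]; simp [brk_q_comp _ 0 (by decide), brk_p_comp _ 0 (by decide)]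
  · rw [hz]; simp [brk_q_comp _ 1 (by decide), brk_p_comp _ 1 (by decide)]
  · rw [hz]; simp [brk_q_comp _ 2 (by decide), brk_p_comp _ 2 (by decide)]
  · have := congrFun hbz 3; rw [brk_h_comp3] at this; exact this
  · have := congrFun hbz 4
    rw [brk_h_comp4] at this
    exact neg_eq_zero.mp this
  · exact absurd rfl hk
  · rw [hz]; simp [brk_q_comp _ 6 (by decide), brk_p_comp _ 6 (by decide)]
  · rw [hz]; simp [brk_q_comp _ 7 (by decide), brk_p_comp _ 7 (by decide)]
  · rw [hz]
    have h1 := mem_S0_comp (hS0 pV pV_mem)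
    have h2 := mem_S0_comp (hS0 qV qV_mem)
    simp [brk_q_comp8, brk_p_comp8, h1.1, h2.2.1]

lemma der0_h5 (D : SS → SS) (hD : IsSuperDer0 D) : D hV 5 = 0 := by
  obtain ⟨hlin, hS0, _, hder⟩ := hD
  have hh : D hV = brk (D eV) fV + brk eV (D fV) := by
    have h := hder eV fV (Or.inl eV_mem) (Or.inl fV_mem)
    rwa [brk_ef] at h
  rw [hh]
  simp [brk_f_comp5, brk_e_comp5]

lemma der1_z (D : SS → SS) (hD : IsSuperDer1 D) : D zV = 0 := by
  obtain ⟨hlin, _, hS1, _, hder⟩ := hD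
  have h := hder GV GV GV_mem (Or.inr GV_mem)
  rw [brk_GG] at h
  have hm := mem_S0_comp (hS1 GV GV_mem)
  rw [h, brk_G_right _ hm.1 hm.2.1 hm.2.2, brk_G_left _ hm.1 hm.2.1 hm.2.2]
  simp

lemma der1_h5 (D : SS → SS) (hD : IsSuperDer1 D) : D hV 5 = 0 := by
  obtain ⟨hlin, _, hS1, _, hder⟩ := hD
  have h := hder EV FV EV_mem (Or.inr FV_mem)
  rw [brk_EF, hlin.map_neg] at h
  have h5 := congrFun h 5
  simp only [Pi.neg_apply, Pi.sub_apply, brk_F_comp5, brk_E_comp5, sub_zero] at h5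
  exact neg_eq_zero.mp h5

lemma superDer_z (D : SS → SS) (hD : IsSuperDer D) (k : Fin 9) (hk : k ≠ 5) :
    D zV k = 0 := by
  obtain ⟨D0, D1, h0, h1, hsum⟩ := hD
  rw [hsum, Pi.add_apply, der0_z D0 h0 k hk, der1_z D1 h1]
  simp

lemma superDer_h5 (D : SS → SS) (hD : IsSuperDer D) : D hV 5 = 0 := by
  obtain ⟨D0, D1, h0, h1, hsum⟩ := hD
  rw [hsum, Pi.add_apply, der0_h5 D0 h0, der1_h5 D1 h1]
  simp

/-- If `Δ` is a local super-derivation of 𝒮 with `Δ(h+z) = 0`, then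
`Δ(h) = 0` and `Δ(z) = 0`. -/
theorem localDer_h_z_zero (Δ : SS → SS) (hΔ : IsLocalSuperDer Δ)
    (hz : Δ (hV + zV) = 0) : Δ hV = 0 ∧ Δ zV = 0 := by
  obtain ⟨hlin, hloc⟩ := hΔ
  obtain ⟨Dz, hDz, hz'⟩ := hloc zV
  obtain ⟨Dh, hDh, hh'⟩ := hloc hV
  have hsum : Δ hV + Δ zV = 0 := by rw [← hlin.map_add, hz]
  have h5 : Δ hV 5 = 0 := by rw [hh']; exact superDer_h5 Dh hDh
  have hzk : ∀ k : Fin 9, k ≠ 5 → Δ zV k = 0 := fun k hk => by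
    rw [hz']; exact superDer_z Dz hDz k hk
  have hz5 : Δ zV 5 = 0 := by
    have h := congrFun hsum 5
    simp only [Pi.add_apply, Pi.zero_apply, h5, zero_add] at h
    exact h
  have hzero : Δ zV = 0 := by
    funext k
    rw [Pi.zero_apply]
    by_cases hk : k = 5
    · subst hk; exact hz5
    · exact hzk k hk
  refine ⟨?_, hzero⟩
  have hneg : Δ hV = -Δ zV := eq_neg_of_add_eq_zero_left hsum
  rw [hneg, hzero, neg_zero]
end
end

section
/- The super-derivation δ of the super Schrödinger algebra 𝒮 is not inner: there is no a ∈ 𝒮 such that δ(x) = [a, x] for all x ∈ 𝒮. Consequently IDer(𝒮) ∩ ℂδ = {0}. -/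
noncomputable section

lemma brkB_five (i : Fin 9) : brkB i 5 = 0 := by
  fin_cases i <;> rfl

lemma brk_zV (a : SS) : brk a zV = 0 := by
  unfold brk
  apply Finset.sum_eq_zero; intro i _
  apply Finset.sum_eq_zero; intro j _
  by_cases hj : j = 5
  · subst hj; rw [brkB_five]; simp
  · have hz : zV j = 0 := by
      simp [zV, Pi.single_apply, hj]
    rw [hz, mul_zero, zero_smul]

lemma delta_zV_five : deltaMap zV 5 = 2 := by
  simp [deltaMap, zV, pV, qV, GV, Pi.single_apply]

/-- The super-derivation δ is not inner, and IDer(𝒮) ∩ ℂδ = {0}: any scalar multiple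
of δ which is inner must vanish. -/
theorem delta_not_inner :
    (¬ ∃ a : SS, ∀ x : SS, deltaMap x = brk a x) ∧
    (∀ (c : ℂ) (a : SS), (∀ x : SS, c • deltaMap x = brk a x) →
      ∀ x : SS, c • deltaMap x = 0) := by
  constructor
  · rintro ⟨a, h⟩
    have h0 := h zV
    rw [brk_zV] at h0
    have h5 : deltaMap zV 5 = 0 := by rw [h0]; rfl
    rw [delta_zV_five] at h5
    norm_num at h5
  · intro c a h x
    have h0 := h zV
    rw [brk_zV] at h0
    have h5 : (c • deltaMap zV) 5 = 0 := by rw [h0]; rfl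
    rw [Pi.smul_apply, delta_zV_five, smul_eq_mul] at h5
    have hc : c = 0 := (mul_eq_zero.mp h5).resolve_right two_ne_zero
    rw [hc, zero_smul]
end
end
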